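/- Let G be a connected graph and H a graph. Then dim_f(G[H]) = m1(G)·l_f(H) + (m2(G)/2)·dim_f(K2[H]) + (m3(G)/2)·dim_f(K2[H̄]), where H̄ is the complement of H. -/

import Mathlib

open Finset

variable {α β V : Type*}

/-- The corona product `G ⊙ H`. -/
def SimpleGraph.corona (G : SimpleGraph α) (H : SimpleGraph β) :
    SimpleGraph (α ⊕ α × β) where
  Adj x y :=
    match x, y with
    | Sum.inl u1, Sum.inl u2 => G.Adj u1 u2
    | Sum.inl u1, Sum.inr p => u1 = p.1
    | Sum.inr p, Sum.inl u2 => p.1 = u2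
    | Sum.inr p, Sum.inr q => p.1 = q.1 ∧ H.Adj p.2 q.2
  symm := by
    constructor
    rintro (u1 | p) (u2 | q) h
    · exact h.symm
    · exact h.symm
    · exact h.symm
    · exact ⟨h.1.symm, h.2.symm⟩
  loopless := by
    constructor
    rintro (u | p) h
    · exact G.irrefl h
    · exact H.irrefl h.2

/-- The lexicographic product `G[H]`. -/
def SimpleGraph.lexProd (G : SimpleGraph α) (H : SimpleGraph β) :
    SimpleGraph (α × β) where
  Adj x y := G.Adj x.1 y.1 ∨ (x.1 = y.1 ∧ H.Adj x.2 y.2)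
  symm := by
    constructor
    rintro x y (h | ⟨h1, h2⟩)
    · exact Or.inl h.symm
    · exact Or.inr ⟨h1.symm, h2.symm⟩
  loopless := by
    constructor
    rintro x (h | ⟨h1, h2⟩)
    · exact G.irrefl h
    · exact H.irrefl h2

open scoped Classical in
/-- `R_F{x,y}`: the set of vertices resolving `x` and `y` (distance measured by `edist`,
which is `∞` between vertices in different components). -/
noncomputable def resolvingFinset (F : SimpleGraph V) [Fintype V] (x y : V) : Finset V :=
  univ.filter fun z => F.edist x z ≠ F.edist y z

/-- `S_H{v₁,v₂} = {v₁,v₂} ∪ (N_H(v₁) Δ N_H(v₂))`. -/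
def locatingFinset (H : SimpleGraph V) [Fintype V] [DecidableEq V]
    [DecidableRel H.Adj] (v1 v2 : V) : Finset V :=
  {v1, v2} ∪ symmDiff (H.neighborFinset v1) (H.neighborFinset v2)

/-- A resolving function of `F`. -/
def IsResolvingFn (F : SimpleGraph V) [Fintype V] (g : V → ℝ) : Prop :=
  (∀ v, g v ∈ Set.Icc (0 : ℝ) 1) ∧
    ∀ x y : V, x ≠ y → 1 ≤ ∑ z ∈ resolvingFinset F x y, g z

/-- The fractional metric dimension `dim_f(F)`. -/
noncomputable def fracMetricDim (F : SimpleGraph V) [Fintype V] : ℝ :=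
  sInf {w | ∃ g, IsResolvingFn F g ∧ w = ∑ v, g v}

/-- A locating function of `H`. -/
def IsLocatingFn (H : SimpleGraph V) [Fintype V] [DecidableEq V]
    [DecidableRel H.Adj] (g : V → ℝ) : Prop :=
  (∀ v, g v ∈ Set.Icc (0 : ℝ) 1) ∧
    ∀ v1 v2 : V, v1 ≠ v2 → 1 ≤ ∑ v ∈ locatingFinset H v1 v2, g v

/-- `l_f(H)`: the minimum weight of a locating function. -/
noncomputable def fracLoc (H : SimpleGraph V) [Fintype V] [DecidableEq V]
    [DecidableRel H.Adj] : ℝ :=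
  sInf {w | ∃ g, IsLocatingFn H g ∧ w = ∑ v, g v}

open scoped Classical in
/-- `λ(H)`: maximum number of common neighbours of two adjacent vertices, `-1` if no edges. -/
noncomputable def lambdaMax (H : SimpleGraph V) [Fintype V] : ℤ :=
  if hne : (univ.filter fun p : V × V => H.Adj p.1 p.2).Nonempty then
    (univ.filter fun p : V × V => H.Adj p.1 p.2).sup' hne fun p =>
      ((univ.filter fun w => H.Adj p.1 w ∧ H.Adj p.2 w).card : ℤ)
  else -1

open scoped Classical in
/-- `μ(H)`: maximum number of common neighbours of two distinct nonadjacent vertices,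
`0` for complete graphs. -/
noncomputable def muMax (H : SimpleGraph V) [Fintype V] : ℤ :=
  if hne : (univ.filter fun p : V × V => p.1 ≠ p.2 ∧ ¬H.Adj p.1 p.2).Nonempty then
    (univ.filter fun p : V × V => p.1 ≠ p.2 ∧ ¬H.Adj p.1 p.2).sup' hne fun p =>
      ((univ.filter fun w => H.Adj p.1 w ∧ H.Adj p.2 w).card : ℤ)
  else 0

/-- A graph is vertex-transitive if its automorphism group is transitive on vertices. -/
def IsVertexTransitive (H : SimpleGraph V) : Prop :=
  ∀ u v : V, ∃ φ : H ≃g H, φ u = v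

/-- Two distinct vertices are twins if they have the same closed or the same open
neighbourhood. -/
def SimpleGraph.Twins (G : SimpleGraph V) (u1 u2 : V) : Prop :=
  u1 ≠ u2 ∧ (insert u1 (G.neighborSet u1) = insert u2 (G.neighborSet u2) ∨
    G.neighborSet u1 = G.neighborSet u2)

open scoped Classical in
/-- `m₁(G)`: number of vertices in twin-equivalence classes of type 1 (singletons). -/
noncomputable def m1 (G : SimpleGraph V) [Fintype V] : ℕ :=
  (univ.filter fun u => ∀ w, ¬G.Twins u w).card

open scoped Classical in
/-- `m₂(G)`: number of vertices in twin-equivalence classes of type 2 (cliques). -/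
noncomputable def m2 (G : SimpleGraph V) [Fintype V] : ℕ :=
  (univ.filter fun u => ∃ w, G.Twins u w ∧ G.Adj u w).card

open scoped Classical in
/-- `m₃(G)`: number of vertices in twin-equivalence classes of type 3 (independent sets). -/
noncomputable def m3 (G : SimpleGraph V) [Fintype V] : ℕ :=
  (univ.filter fun u => ∃ w, G.Twins u w ∧ ¬G.Adj u w).card

/-!
A function `g` on `G[H]` is resolving exactly when every column `g(u, ·)` is a locating function
of `H` and, for every pair of twins `u₁, u₂` of `G`, the two columns together form a resolving
function of `K₂[H]` (adjacent twins) or of `K₂[H̄]` (non-adjacent twins): the two columns of a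
pair of twins are isometric to `K₂[H]`, respectively to `K₂[H̄]` up to exchanging the distances
`1` and `2`, while two vertices in the columns of non-twins are already separated by a whole
column, of weight at least `1`.

The minimum weight therefore splits over the twin classes of `G`. A class `{u}` contributes
`l_f(H)`. In a twin class of size `k` any two columns weigh at least `dim_f(K₂[H])` (or
`dim_f(K₂[H̄])`), so the class weighs at least `k/2` times that; conversely this is attained by
giving every column of the class the average of the two columns of a resolving function of
`K₂[H]` (or `K₂[H̄]`), which is again resolving because swapping the two columns is an
automorphism.
-/

namespace SimpleGraph

section Edist

variable {W : Type*} {F : SimpleGraph V} {F' : SimpleGraph W}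

theorem Hom.edist_le (f : F →g F') (x y : V) : F'.edist (f x) (f y) ≤ F.edist x y := by
  by_cases h : F.Reachable x y
  · obtain ⟨p, hp⟩ := h.exists_walk_length_eq_edist
    rw [← hp, ← p.length_map f]
    exact SimpleGraph.edist_le _
  · rw [edist_eq_top_of_not_reachable h]
    exact le_top

theorem Iso.edist_eq (φ : F ≃g F') (x y : V) : F'.edist (φ x) (φ y) = F.edist x y :=
  le_antisymm (φ.toHom.edist_le x y) (by simpa using φ.symm.toHom.edist_le (φ x) (φ y))

end Edist

section LexProd

variable {γ : Type*} {G : SimpleGraph α} {H : SimpleGraph β}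

theorem lexProd_adj {x y : α × β} :
    (G.lexProd H).Adj x y ↔ G.Adj x.1 y.1 ∨ (x.1 = y.1 ∧ H.Adj x.2 y.2) :=
  Iff.rfl

theorem edist_fst_le_length {x y : α × β} (p : (G.lexProd H).Walk x y) :
    G.edist x.1 y.1 ≤ p.length := by
  induction p with
  | nil => simp
  | cons h q ih =>
    have h₁ := edist_le_one_iff_adj_or_eq.mpr (h.imp id And.left)
    calc _ ≤ _ := G.edist_triangle
      _ ≤ 1 + q.length := add_le_add h₁ ih
      _ = _ := by simp [add_comm]

theorem lexProd_edist_of_fst_ne {u₁ u₂ : α} (h : u₁ ≠ u₂) (v₁ v₂ : β) :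
    (G.lexProd H).edist (u₁, v₁) (u₂, v₂) = G.edist u₁ u₂ := by
  refine le_antisymm ?_ ?_
  · by_cases hr : G.Reachable u₁ u₂
    · obtain ⟨p, hp⟩ := hr.exists_walk_length_eq_edist
      cases p with
      | nil => exact absurd rfl h
      | cons hs q =>
        let φ : G →g G.lexProd H := ⟨fun u => (u, v₂), Or.inl⟩
        rw [← hp]
        calc _ ≤ _ := edist_le (.cons (Or.inl hs : (G.lexProd H).Adj (u₁, v₁) (_, v₂)) (q.map φ))
          _ = _ := by rw [Walk.length_cons, ← q.length_map φ]; rfl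
    · simp [edist_eq_top_of_not_reachable hr]
  · by_cases hr : (G.lexProd H).Reachable (u₁, v₁) (u₂, v₂)
    · obtain ⟨p, hp⟩ := hr.exists_walk_length_eq_edist
      exact hp ▸ edist_fst_le_length p
    · simp [edist_eq_top_of_not_reachable hr]

theorem lexProd_edist_of_fst_eq [DecidableEq β] [DecidableRel H.Adj] {u s : α} (hs : G.Adj u s)
    (v w : β) :
    (G.lexProd H).edist (u, v) (u, w) = if v = w then 0 else if H.Adj v w then 1 else 2 := by
  split_ifs with hvw hadj
  · simp [hvw]
  · exact edist_eq_one_iff_adj.mpr (Or.inr ⟨rfl, hadj⟩)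
  · refine edist_eq_two_iff.mpr ⟨by simpa using hvw, ?_, (s, v), Or.inl hs, Or.inl hs⟩
    rintro (h | ⟨-, h⟩)
    exacts [G.irrefl h, hadj h]

def Iso.lexProdLeft {G' : SimpleGraph γ} (φ : G ≃g G') (H : SimpleGraph β) :
    G.lexProd H ≃g G'.lexProd H where
  toEquiv := φ.toEquiv.prodCongr (Equiv.refl β)
  map_rel_iff' := by simp [lexProd_adj, φ.map_adj_iff]

end LexProd

section Twins

variable {G : SimpleGraph α} {u₁ u₂ : α}

theorem twins_iff (hne : u₁ ≠ u₂) :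
    G.Twins u₁ u₂ ↔ ∀ s, s ≠ u₁ → s ≠ u₂ → (G.Adj u₁ s ↔ G.Adj u₂ s) := by
  constructor
  · rintro ⟨-, h | h⟩ s h₁ h₂
    · simpa [h₁, h₂] using Set.ext_iff.mp h s
    · exact Set.ext_iff.mp h s
  · intro h
    refine ⟨hne, ?_⟩
    by_cases hadj : G.Adj u₁ u₂
    · left
      ext s
      by_cases h₁ : s = u₁ <;> by_cases h₂ : s = u₂ <;> simp_all [adj_comm]
    · right
      ext s
      by_cases h₁ : s = u₁ <;> by_cases h₂ : s = u₂ <;> simp_all [adj_comm]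

theorem Twins.symm (h : G.Twins u₁ u₂) : G.Twins u₂ u₁ :=
  ⟨h.1.symm, h.2.imp Eq.symm Eq.symm⟩

theorem twins_and_adj_iff (hne : u₁ ≠ u₂) :
    G.Twins u₁ u₂ ∧ G.Adj u₁ u₂ ↔ insert u₁ (G.neighborSet u₁) = insert u₂ (G.neighborSet u₂) := by
  constructor
  · rintro ⟨⟨-, h | h⟩, hadj⟩
    · exact h
    · exact absurd (h ▸ hadj : u₂ ∈ G.neighborSet u₂) (G.irrefl)
  · intro h
    refine ⟨⟨hne, Or.inl h⟩, ?_⟩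
    have : u₂ ∈ insert u₁ (G.neighborSet u₁) := h ▸ Set.mem_insert _ _
    exact this.resolve_left hne.symm

theorem twins_and_not_adj_iff (hne : u₁ ≠ u₂) :
    G.Twins u₁ u₂ ∧ ¬G.Adj u₁ u₂ ↔ G.neighborSet u₁ = G.neighborSet u₂ := by
  constructor
  · rintro ⟨⟨-, h | h⟩, hadj⟩
    · have : u₁ ∈ insert u₂ (G.neighborSet u₂) := h ▸ Set.mem_insert _ _
      exact absurd (this.resolve_left hne).symm hadj
    · exact h
  · intro h
    exact ⟨⟨hne, Or.inr h⟩, fun hadj => G.irrefl (h ▸ hadj : u₂ ∈ G.neighborSet u₂)⟩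

theorem Twins.adj_of_adj {w x : α} (hw : G.Twins u₁ w) (hwa : G.Adj u₁ w) (hx : G.Twins u₁ x) :
    G.Adj u₁ x := by
  obtain rfl | hxw := eq_or_ne x w
  · exact hwa
  have hxw' : G.Adj x w := ((twins_iff hx.1).mp hx w hw.1.symm hxw.symm).mp hwa
  exact ((twins_iff hw.1).mp hw x hx.1.symm hxw).mpr hxw'.symm

theorem Twins.edist_eq (h : G.Twins u₁ u₂) {t : α} (h₁ : t ≠ u₁) (h₂ : t ≠ u₂) :
    G.edist u₁ t = G.edist u₂ t := by
  have key : ∀ {a b}, G.Twins a b → t ≠ a → t ≠ b → G.edist a t ≤ G.edist b t := by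
    intro a b hab ha hb
    by_cases hr : G.Reachable b t
    · obtain ⟨p, hp⟩ := hr.exists_walk_length_eq_edist
      rw [← hp]
      cases p with
      | nil => exact absurd rfl hb
      | @cons _ s _ hs q =>
        obtain rfl | hsa := eq_or_ne s a
        · exact (edist_le q).trans (by simp)
        · have has : G.Adj a s := ((twins_iff hab.1).mp hab s hsa hs.ne').mpr hs
          exact (edist_le (.cons has q)).trans_eq (by simp)
    · simp [edist_eq_top_of_not_reachable hr]
  exact le_antisymm (key h h₁ h₂) (key h.symm h₂ h₁)

theorem exists_edist_ne_of_not_twins (hne : u₁ ≠ u₂) (h : ¬G.Twins u₁ u₂) :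
    ∃ t, t ≠ u₁ ∧ t ≠ u₂ ∧ G.edist u₁ t ≠ G.edist u₂ t := by
  obtain ⟨s, h₁, h₂, hs⟩ : ∃ s, s ≠ u₁ ∧ s ≠ u₂ ∧ ¬(G.Adj u₁ s ↔ G.Adj u₂ s) := by
    simpa [twins_iff hne] using h
  refine ⟨s, h₁, h₂, fun hd => hs ?_⟩
  rw [← edist_eq_one_iff_adj, ← edist_eq_one_iff_adj, hd]

end Twins

end SimpleGraph

open SimpleGraph

section Resolving

variable {W : Type*} {F : SimpleGraph W} {F' : SimpleGraph V}

theorem injective_of_edist_eq {e : W → V} {f : ℕ∞ → ℕ∞} (hf : f.Injective)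
    (hd : ∀ x z, F'.edist (e x) (e z) = f (F.edist x z)) : e.Injective := fun a b hab =>
  edist_eq_zero_iff.mp (hf ((hd a b).symm.trans (by rw [hab, hd b b, edist_self])))

variable [Fintype V] [Fintype W]

theorem mem_resolvingFinset {x y z : V} :
    z ∈ resolvingFinset F' x y ↔ F'.edist x z ≠ F'.edist y z := by
  simp [resolvingFinset]

theorem isResolvingFn_one : IsResolvingFn F' fun _ => 1 := by
  refine ⟨fun _ => ⟨zero_le_one, le_rfl⟩, fun x y hxy => ?_⟩
  have hx : x ∈ resolvingFinset F' x y := by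
    rw [mem_resolvingFinset, edist_self, ne_comm, ne_eq, edist_eq_zero_iff]
    exact hxy.symm
  simpa using Finset.card_pos.mpr ⟨x, hx⟩

theorem fracMetricDim_le {g : V → ℝ} (hg : IsResolvingFn F' g) : fracMetricDim F' ≤ ∑ v, g v := by
  refine csInf_le ?_ ⟨g, hg, rfl⟩
  refine ⟨0, ?_⟩
  rintro _ ⟨g, hg, rfl⟩
  exact sum_nonneg fun v _ => (hg.1 v).1

theorem le_fracMetricDim {a : ℝ} (h : ∀ g, IsResolvingFn F' g → a ≤ ∑ v, g v) :
    a ≤ fracMetricDim F' :=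
  le_csInf ⟨_, _, isResolvingFn_one, rfl⟩ fun _ ⟨g, hg, hw⟩ => hw ▸ h g hg

theorem le_add_mul_csInf {S : Set ℝ} (hS : S.Nonempty) {a b c : ℝ} (hc : 0 ≤ c)
    (h : ∀ w ∈ S, a ≤ b + c * w) : a ≤ b + c * sInf S := by
  obtain rfl | hc := hc.eq_or_lt
  · obtain ⟨w, hw⟩ := hS
    simpa using h w hw
  have : (a - b) / c ≤ sInf S :=
    le_csInf hS fun w hw => by rw [div_le_iff₀ hc]; linarith [h w hw]
  rw [div_le_iff₀ hc] at this
  linarith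

theorem le_add_mul_fracMetricDim {a b c : ℝ} (hc : 0 ≤ c)
    (h : ∀ g, IsResolvingFn F' g → a ≤ b + c * ∑ v, g v) : a ≤ b + c * fracMetricDim F' := by
  refine le_add_mul_csInf ?_ hc ?_
  · exact ⟨_, _, isResolvingFn_one, rfl⟩
  rintro _ ⟨g, hg, rfl⟩
  exact h g hg

theorem IsResolvingFn.average {g₁ g₂ : V → ℝ} (h₁ : IsResolvingFn F' g₁)
    (h₂ : IsResolvingFn F' g₂) : IsResolvingFn F' fun v => (g₁ v + g₂ v) / 2 := by
  refine ⟨fun v => ⟨?_, ?_⟩, fun x y hxy => ?_⟩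
  · linarith [(h₁.1 v).1, (h₂.1 v).1]
  · linarith [(h₁.1 v).2, (h₂.1 v).2]
  · rw [← sum_div, sum_add_distrib]
    linarith [h₁.2 x y hxy, h₂.2 x y hxy]

theorem sum_resolvingFinset_of_edist_eq {e : W → V} {f : ℕ∞ → ℕ∞} (hf : f.Injective)
    (hd : ∀ x z, F'.edist (e x) (e z) = f (F.edist x z)) {x y : W}
    (hout : ∀ z ∉ Set.range e, F'.edist (e x) z = F'.edist (e y) z) (g : V → ℝ) :
    ∑ z ∈ resolvingFinset F' (e x) (e y), g z = ∑ z ∈ resolvingFinset F x y, g (e z) := by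
  have hR : resolvingFinset F' (e x) (e y) =
      (resolvingFinset F x y).map ⟨e, injective_of_edist_eq hf hd⟩ := by
    ext z
    simp only [mem_map, mem_resolvingFinset, Function.Embedding.coeFn_mk]
    constructor
    · intro hz
      by_cases hr : z ∈ Set.range e
      · obtain ⟨w, rfl⟩ := hr
        exact ⟨w, by rwa [hd, hd, hf.ne_iff] at hz, rfl⟩
      · exact absurd (hout z hr) hz
    · rintro ⟨w, hw, rfl⟩
      rwa [hd, hd, hf.ne_iff]
  rw [hR, sum_map]
  rfl

theorem IsResolvingFn.comp {e : W → V} {f : ℕ∞ → ℕ∞} (hf : f.Injective)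
    (hd : ∀ x z, F'.edist (e x) (e z) = f (F.edist x z))
    (hout : ∀ x y, ∀ z ∉ Set.range e, F'.edist (e x) z = F'.edist (e y) z) {g : V → ℝ}
    (hg : IsResolvingFn F' g) : IsResolvingFn F (g ∘ e) :=
  ⟨fun w => hg.1 (e w), fun x y hxy =>
    sum_resolvingFinset_of_edist_eq hf hd (hout x y) g ▸
      hg.2 _ _ ((injective_of_edist_eq hf hd).ne hxy)⟩

theorem IsResolvingFn.comp_iso (φ : F ≃g F') {g : V → ℝ} (hg : IsResolvingFn F' g) :
    IsResolvingFn F (g ∘ φ) :=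
  hg.comp (f := id) Function.injective_id φ.edist_eq fun _ _ z hz => absurd (φ.surjective z) hz

end Resolving

section Locating

variable [Fintype β] [DecidableEq β] {H : SimpleGraph β} [DecidableRel H.Adj]

theorem isLocatingFn_one : IsLocatingFn H fun _ => 1 :=
  ⟨fun _ => ⟨zero_le_one, le_rfl⟩, fun v₁ v₂ _ => by
    simpa using Finset.card_pos.mpr ⟨v₁, by simp [locatingFinset]⟩⟩

theorem fracLoc_le {g : β → ℝ} (hg : IsLocatingFn H g) : fracLoc H ≤ ∑ v, g v := by
  refine csInf_le ?_ ⟨g, hg, rfl⟩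
  refine ⟨0, ?_⟩
  rintro _ ⟨g, hg, rfl⟩
  exact sum_nonneg fun v _ => (hg.1 v).1

theorem le_add_mul_fracLoc {a b c : ℝ} (hc : 0 ≤ c)
    (h : ∀ g, IsLocatingFn H g → a ≤ b + c * ∑ v, g v) : a ≤ b + c * fracLoc H := by
  refine le_add_mul_csInf ?_ hc ?_
  · exact ⟨_, _, isLocatingFn_one, rfl⟩
  rintro _ ⟨g, hg, rfl⟩
  exact h g hg

theorem IsLocatingFn.one_le_sum (hcb : 2 ≤ Fintype.card β) {g : β → ℝ} (hg : IsLocatingFn H g) :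
    1 ≤ ∑ v, g v := by
  obtain ⟨v₁, v₂, hne⟩ := Fintype.exists_pair_of_one_lt_card hcb
  exact (hg.2 v₁ v₂ hne).trans
    (sum_le_sum_of_subset_of_nonneg (subset_univ _) fun v _ _ => (hg.1 v).1)

theorem locatingFinset_compl (v₁ v₂ : β) : locatingFinset Hᶜ v₁ v₂ = locatingFinset H v₁ v₂ := by
  ext w
  simp only [locatingFinset, mem_union, mem_insert, mem_singleton, mem_symmDiff,
    mem_neighborFinset, compl_adj]
  by_cases h₁ : w = v₁ <;> by_cases h₂ : w = v₂ <;> simp_all [eq_comm]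
  tauto

theorem isLocatingFn_compl_iff {g : β → ℝ} : IsLocatingFn Hᶜ g ↔ IsLocatingFn H g := by
  simp only [IsLocatingFn, locatingFinset_compl]

end Locating

local notation "K₂[" H "]" => SimpleGraph.lexProd (⊤ : SimpleGraph (Fin 2)) H

section ColumnPairs

variable {G : SimpleGraph α} {H : SimpleGraph β} {u₁ u₂ : α}

def embedPair (u₁ u₂ : α) (p : Fin 2 × β) : α × β := (![u₁, u₂] p.1, p.2)

theorem sum_comp_embedPair [Fintype β] (g : α × β → ℝ) :
    ∑ p, (g ∘ embedPair u₁ u₂) p = ∑ v, g (u₁, v) + ∑ v, g (u₂, v) := by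
  simp [Fintype.sum_prod_type, Fin.sum_univ_two, embedPair]

theorem edist_embedPair_of_adj (hadj : G.Adj u₁ u₂) (x z : Fin 2 × β) :
    (G.lexProd H).edist (embedPair u₁ u₂ x) (embedPair u₁ u₂ z) = K₂[H].edist x z := by
  classical
  obtain ⟨i, v⟩ := x
  obtain ⟨j, w⟩ := z
  have h01 : (⊤ : SimpleGraph (Fin 2)).Adj 0 1 := by simp
  fin_cases i <;> fin_cases j <;>
    simp [embedPair, lexProd_edist_of_fst_eq hadj, lexProd_edist_of_fst_eq hadj.symm,
      lexProd_edist_of_fst_eq h01, lexProd_edist_of_fst_eq h01.symm, lexProd_edist_of_fst_ne h01.ne,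
      lexProd_edist_of_fst_ne h01.ne.symm, lexProd_edist_of_fst_ne hadj.ne,
      lexProd_edist_of_fst_ne hadj.ne.symm, edist_eq_one_iff_adj.mpr hadj,
      edist_eq_one_iff_adj.mpr hadj.symm, edist_top]

theorem edist_embedPair_of_not_adj (hT : G.Twins u₁ u₂) (hadj : ¬G.Adj u₁ u₂) {s : α}
    (hs : G.Adj u₁ s) (x z : Fin 2 × β) :
    (G.lexProd H).edist (embedPair u₁ u₂ x) (embedPair u₁ u₂ z) =
      Equiv.swap 1 2 (K₂[Hᶜ].edist x z) := by
  classical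
  have hs₂ : G.Adj u₂ s := by
    rw [← mem_neighborSet, ← (twins_and_not_adj_iff hT.1).mp ⟨hT, hadj⟩]
    exact hs
  have h₂ : G.edist u₁ u₂ = 2 := edist_eq_two_iff.mpr ⟨hT.1, hadj, s, hs, hs₂⟩
  obtain ⟨i, v⟩ := x
  obtain ⟨j, w⟩ := z
  have h01 : (⊤ : SimpleGraph (Fin 2)).Adj 0 1 := by simp
  have hswap : Equiv.swap (1 : ℕ∞) 2 0 = 0 := Equiv.swap_apply_of_ne_of_ne (by decide) (by decide)
  fin_cases i <;> fin_cases j <;>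
    simp [embedPair, edist_top, lexProd_edist_of_fst_eq hs, lexProd_edist_of_fst_eq hs₂,
      lexProd_edist_of_fst_eq h01, lexProd_edist_of_fst_eq h01.symm, lexProd_edist_of_fst_ne h01.ne,
      lexProd_edist_of_fst_ne h01.ne.symm, lexProd_edist_of_fst_ne hT.1,
      lexProd_edist_of_fst_ne hT.1.symm, h₂, edist_comm (u := u₂)]
  all_goals split_ifs <;> simp_all

theorem edist_embedPair_eq_of_not_mem_range (hT : G.Twins u₁ u₂) (x y : Fin 2 × β)
    {z : α × β} (hz : z ∉ Set.range (embedPair u₁ u₂)) :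
    (G.lexProd H).edist (embedPair u₁ u₂ x) z = (G.lexProd H).edist (embedPair u₁ u₂ y) z := by
  obtain ⟨t, w⟩ := z
  have ht₁ : t ≠ u₁ := by rintro rfl; exact hz ⟨(0, w), rfl⟩
  have ht₂ : t ≠ u₂ := by rintro rfl; exact hz ⟨(1, w), rfl⟩
  have key : ∀ p, (G.lexProd H).edist (embedPair u₁ u₂ p) (t, w) = G.edist u₁ t := by
    rintro ⟨i, v⟩
    fin_cases i
    · exact lexProd_edist_of_fst_ne ht₁.symm _ _
    · exact (lexProd_edist_of_fst_ne ht₂.symm _ _).trans (hT.edist_eq ht₁ ht₂).symm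
  rw [key, key]

variable [Fintype α] [Fintype β]

theorem sum_resolvingFinset_lexProd_of_fst_eq [DecidableEq β] [DecidableRel H.Adj] {u s : α}
    (hs : G.Adj u s) {v₁ v₂ : β} (hne : v₁ ≠ v₂) (g : α × β → ℝ) :
    ∑ z ∈ resolvingFinset (G.lexProd H) (u, v₁) (u, v₂), g z =
      ∑ v ∈ locatingFinset H v₁ v₂, g (u, v) := by
  have hR : resolvingFinset (G.lexProd H) (u, v₁) (u, v₂) = {u} ×ˢ locatingFinset H v₁ v₂ := by
    ext ⟨t, w⟩
    rw [mem_resolvingFinset, mem_product, mem_singleton]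
    obtain rfl | ht := eq_or_ne t u
    · rw [lexProd_edist_of_fst_eq hs, lexProd_edist_of_fst_eq hs]
      simp only [locatingFinset, mem_union, mem_insert, mem_singleton, mem_symmDiff,
        mem_neighborFinset, true_and]
      by_cases h₁ : v₁ = w <;> by_cases h₂ : v₂ = w <;>
        by_cases a₁ : H.Adj v₁ w <;> by_cases a₂ : H.Adj v₂ w <;> simp_all [eq_comm]
    · rw [lexProd_edist_of_fst_ne ht.symm, lexProd_edist_of_fst_ne ht.symm]
      simp [ht]
  rw [hR, sum_product, sum_singleton]

variable {g : α × β → ℝ}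

theorem IsResolvingFn.isLocatingFn_col [DecidableEq β] [DecidableRel H.Adj] {u s : α}
    (hs : G.Adj u s) (hg : IsResolvingFn (G.lexProd H) g) : IsLocatingFn H fun v => g (u, v) :=
  ⟨fun v => hg.1 (u, v), fun v₁ v₂ hne => by
    simpa [sum_resolvingFinset_lexProd_of_fst_eq hs hne] using
      hg.2 (u, v₁) (u, v₂) (by simpa using hne)⟩

theorem IsResolvingFn.comp_embedPair_of_adj (hg : IsResolvingFn (G.lexProd H) g)
    (hT : G.Twins u₁ u₂) (hadj : G.Adj u₁ u₂) : IsResolvingFn K₂[H] (g ∘ embedPair u₁ u₂) :=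
  hg.comp (f := id) Function.injective_id (edist_embedPair_of_adj hadj)
    fun x y _ hz => edist_embedPair_eq_of_not_mem_range hT x y hz

theorem IsResolvingFn.comp_embedPair_of_not_adj (hG : ∀ u, ¬G.IsIsolated u)
    (hg : IsResolvingFn (G.lexProd H) g) (hT : G.Twins u₁ u₂) (hadj : ¬G.Adj u₁ u₂) :
    IsResolvingFn K₂[Hᶜ] (g ∘ embedPair u₁ u₂) := by
  obtain ⟨s, hs⟩ : ∃ s, G.Adj u₁ s := by simpa [IsIsolated] using hG u₁
  exact hg.comp (Equiv.swap 1 2).injective (edist_embedPair_of_not_adj hT hadj hs)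
    fun x y _ hz => edist_embedPair_eq_of_not_mem_range hT x y hz

theorem isResolvingFn_lexProd_of [DecidableEq β] [DecidableRel H.Adj] (hG : ∀ u, ¬G.IsIsolated u)
    (hcb : 2 ≤ Fintype.card β)
    (hcol : ∀ u, IsLocatingFn H fun v => g (u, v))
    (hadj : ∀ u₁ u₂, G.Twins u₁ u₂ → G.Adj u₁ u₂ → IsResolvingFn K₂[H] (g ∘ embedPair u₁ u₂))
    (hnadj : ∀ u₁ u₂, G.Twins u₁ u₂ → ¬G.Adj u₁ u₂ →
      IsResolvingFn K₂[Hᶜ] (g ∘ embedPair u₁ u₂)) :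
    IsResolvingFn (G.lexProd H) g := by
  refine ⟨fun z => (hcol z.1).1 z.2, ?_⟩
  rintro ⟨u₁, v₁⟩ ⟨u₂, v₂⟩ hne
  obtain ⟨s, hs⟩ : ∃ s, G.Adj u₁ s := by simpa [IsIsolated] using hG u₁
  by_cases hu : u₁ = u₂
  · subst hu
    have hv : v₁ ≠ v₂ := fun h => hne (h ▸ rfl)
    rw [sum_resolvingFinset_lexProd_of_fst_eq hs hv]
    exact (hcol u₁).2 v₁ v₂ hv
  by_cases hT : G.Twins u₁ u₂
  · have hout : ∀ z ∉ Set.range (embedPair u₁ u₂),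
        (G.lexProd H).edist (embedPair u₁ u₂ (0, v₁)) z =
          (G.lexProd H).edist (embedPair u₁ u₂ (1, v₂)) z :=
      fun z hz => edist_embedPair_eq_of_not_mem_range hT _ _ hz
    by_cases ha : G.Adj u₁ u₂
    · have := sum_resolvingFinset_of_edist_eq (f := id) Function.injective_id
        (edist_embedPair_of_adj ha) hout g
      exact this ▸ (hadj u₁ u₂ hT ha).2 (0, v₁) (1, v₂) (by simp)
    · have := sum_resolvingFinset_of_edist_eq (Equiv.swap 1 2).injective
        (edist_embedPair_of_not_adj hT ha hs) hout g
      exact this ▸ (hnadj u₁ u₂ hT ha).2 (0, v₁) (1, v₂) (by simp)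
  · obtain ⟨t, ht₁, ht₂, ht⟩ := exists_edist_ne_of_not_twins hu hT
    have hsub : {t} ×ˢ univ ⊆ resolvingFinset (G.lexProd H) (u₁, v₁) (u₂, v₂) := by
      rintro ⟨t', w⟩ h
      obtain rfl : t' = t := mem_singleton.mp (mem_product.mp h).1
      rwa [mem_resolvingFinset, lexProd_edist_of_fst_ne ht₁.symm, lexProd_edist_of_fst_ne ht₂.symm]
    calc 1 ≤ ∑ v, g (t, v) := (hcol t).one_le_sum hcb
      _ = ∑ z ∈ {t} ×ˢ univ, g z := by rw [sum_product, sum_singleton]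
      _ ≤ _ := sum_le_sum_of_subset_of_nonneg hsub fun z _ _ => ((hcol z.1).1 z.2).1

end ColumnPairs

theorem IsResolvingFn.exists_comp_snd [Fintype β] {F : SimpleGraph β} {g : Fin 2 × β → ℝ}
    (hg : IsResolvingFn K₂[F] g) :
    ∃ h : β → ℝ, IsResolvingFn K₂[F] (fun p => h p.2) ∧ 2 * ∑ v, h v = ∑ p, g p := by
  let σ := (Iso.completeGraph (Equiv.swap (0 : Fin 2) 1)).lexProdLeft F
  refine ⟨fun v => (g (0, v) + g (1, v)) / 2, ?_, ?_⟩
  · convert hg.average (hg.comp_iso σ) using 2 with p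
    obtain ⟨i, v⟩ := p
    fin_cases i <;> simp [σ, Iso.lexProdLeft, Iso.completeGraph, add_comm]
  · rw [mul_sum, Fintype.sum_prod_type_right]
    refine sum_congr rfl fun v _ => ?_
    rw [Fin.sum_univ_two]
    ring

section Averaging

variable {γ δ : Type*} [DecidableEq γ] {f : γ → ℝ} {d : ℝ}

theorem card_mul_le_two_mul_sum_of_pairwise {T : Finset γ} (hT : 2 ≤ #T)
    (h : ∀ a ∈ T, ∀ b ∈ T, a ≠ b → d ≤ f a + f b) : #T * d ≤ 2 * ∑ a ∈ T, f a := by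
  have hk : (1 : ℝ) < #T := by exact_mod_cast hT
  have hrow : ∀ a ∈ T, (#T - 1 : ℝ) * d ≤ (#T - 2) * f a + ∑ b ∈ T, f b := by
    intro a ha
    have := card_nsmul_le_sum (T.erase a) (fun b => f a + f b) d
      fun b hb => h a ha b (mem_of_mem_erase hb) (ne_of_mem_erase hb).symm
    rw [sum_add_distrib, sum_const, sum_erase_eq_sub ha, card_erase_of_mem ha, nsmul_eq_mul,
      nsmul_eq_mul, Nat.cast_pred (by omega)] at this
    linarith
  have := sum_le_sum hrow
  rw [sum_const, nsmul_eq_mul, sum_add_distrib, ← mul_sum, sum_const, nsmul_eq_mul] at this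
  have : (#T - 1 : ℝ) * (#T * d) ≤ (#T - 1) * (2 * ∑ a ∈ T, f a) := by linarith
  exact le_of_mul_le_mul_left this (by linarith)

theorem card_mul_le_two_mul_sum_of_fibers [DecidableEq δ] {S : Finset γ} (κ : γ → δ)
    (hcard : ∀ a ∈ S, 2 ≤ #{b ∈ S | κ b = κ a})
    (h : ∀ a ∈ S, ∀ b ∈ S, a ≠ b → κ a = κ b → d ≤ f a + f b) :
    #S * d ≤ 2 * ∑ a ∈ S, f a := by
  rw [card_eq_sum_card_image κ S, ← sum_fiberwise_of_maps_to (fun a ha => mem_image_of_mem κ ha) f,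
    Nat.cast_sum, sum_mul, mul_sum]
  refine sum_le_sum fun c hc => ?_
  obtain ⟨a, ha, rfl⟩ := mem_image.mp hc
  refine card_mul_le_two_mul_sum_of_pairwise (hcard a ha) fun b hb b' hb' hne => ?_
  rw [mem_filter] at hb hb'
  exact h b hb.1 b' hb'.1 hne (hb.2.trans hb'.2.symm)

theorem sum_filter_add_sum_filter_add_sum_filter {M : Type*} [AddCommMonoid M] (s : Finset γ)
    (g : γ → M) {p q r : γ → Prop} [DecidablePred p] [DecidablePred q] [DecidablePred r]
    (hp : ∀ i, ¬p i ↔ q i ∨ r i) (hqr : ∀ i, q i → ¬r i) :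
    ∑ i ∈ s with p i, g i + ∑ i ∈ s with q i, g i + ∑ i ∈ s with r i, g i = ∑ i ∈ s, g i := by
  rw [add_assoc, ← sum_union (disjoint_filter.mpr fun i _ => hqr i), ← filter_or,
    ← sum_filter_add_sum_filter_not s p, filter_congr fun i _ => (hp i).symm]

end Averaging

section TwinTypes

variable [Fintype α]

open scoped Classical in
theorem SimpleGraph.sum_twin_types (G : SimpleGraph α) (f : α → ℝ) :
    ∑ u with (∀ w, ¬G.Twins u w), f u + ∑ u with (∃ w, G.Twins u w ∧ G.Adj u w), f u +
      ∑ u with (∃ w, G.Twins u w ∧ ¬G.Adj u w), f u = ∑ u, f u := by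
  refine sum_filter_add_sum_filter_add_sum_filter _ _ (fun u => ?_)
    fun u ⟨w, hw, hwa⟩ ⟨x, hx, hxa⟩ => hxa (hw.adj_of_adj hwa hx)
  simp only [not_forall, not_not]
  constructor
  · rintro ⟨w, hw⟩
    exact (em (G.Adj u w)).imp (fun h => ⟨w, hw, h⟩) fun h => ⟨w, hw, h⟩
  · rintro (⟨w, hw, -⟩ | ⟨w, hw, -⟩) <;> exact ⟨w, hw⟩

variable {G : SimpleGraph α} {f : α → ℝ} {d : ℝ}

open scoped Classical in
theorem m2_mul_le_two_mul_sum (h : ∀ u w, G.Twins u w → G.Adj u w → d ≤ f u + f w) :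
    m2 G * d ≤ 2 * ∑ u with (∃ w, G.Twins u w ∧ G.Adj u w), f u := by
  refine card_mul_le_two_mul_sum_of_fibers (fun u => insert u (G.neighborSet u)) ?_ ?_
  · intro u hu
    obtain ⟨w, hT, ha⟩ := (mem_filter.mp hu).2
    refine one_lt_card.mpr ⟨u, mem_filter.mpr ⟨hu, rfl⟩, w, mem_filter.mpr ⟨?_, ?_⟩, hT.1⟩
    · exact mem_filter.mpr ⟨mem_univ _, u, hT.symm, ha.symm⟩
    · exact ((twins_and_adj_iff hT.1).mp ⟨hT, ha⟩).symm
  · intro u _ w _ hne huw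
    exact h u w ((twins_and_adj_iff hne).mpr huw).1 ((twins_and_adj_iff hne).mpr huw).2

open scoped Classical in
theorem m3_mul_le_two_mul_sum (h : ∀ u w, G.Twins u w → ¬G.Adj u w → d ≤ f u + f w) :
    m3 G * d ≤ 2 * ∑ u with (∃ w, G.Twins u w ∧ ¬G.Adj u w), f u := by
  refine card_mul_le_two_mul_sum_of_fibers G.neighborSet ?_ ?_
  · intro u hu
    obtain ⟨w, hT, ha⟩ := (mem_filter.mp hu).2
    refine one_lt_card.mpr ⟨u, mem_filter.mpr ⟨hu, rfl⟩, w, mem_filter.mpr ⟨?_, ?_⟩, hT.1⟩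
    · exact mem_filter.mpr ⟨mem_univ _, u, hT.symm, fun h => ha h.symm⟩
    · exact ((twins_and_not_adj_iff hT.1).mp ⟨hT, ha⟩).symm
  · intro u _ w _ hne huw
    exact h u w ((twins_and_not_adj_iff hne).mpr huw).1 ((twins_and_not_adj_iff hne).mpr huw).2

open scoped Classical in
noncomputable def columnsByTwinType (G : SimpleGraph α) (c₁ c₂ c₃ : β → ℝ) : α → β → ℝ :=
  fun u => if ∀ w, ¬G.Twins u w then c₁ else if ∃ w, G.Twins u w ∧ G.Adj u w then c₂ else c₃

variable {c₁ c₂ c₃ : β → ℝ} {u w : α}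

theorem columnsByTwinType_of_forall_not_twins (h : ∀ w, ¬G.Twins u w) :
    columnsByTwinType G c₁ c₂ c₃ u = c₁ :=
  if_pos h

theorem columnsByTwinType_of_twins_of_adj (hT : G.Twins u w) (ha : G.Adj u w) :
    columnsByTwinType G c₁ c₂ c₃ u = c₂ := by
  have : ∃ x, G.Twins u x ∧ G.Adj u x := ⟨w, hT, ha⟩
  simp only [columnsByTwinType, if_neg (not_forall_not.mpr ⟨w, hT⟩), if_pos this]

theorem columnsByTwinType_of_twins_of_not_adj (hT : G.Twins u w) (ha : ¬G.Adj u w) :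
    columnsByTwinType G c₁ c₂ c₃ u = c₃ := by
  have : ¬∃ x, G.Twins u x ∧ G.Adj u x := fun ⟨x, hx, hxa⟩ => ha (hx.adj_of_adj hxa hT)
  simp only [columnsByTwinType, if_neg (not_forall_not.mpr ⟨w, hT⟩), if_neg this]

open scoped Classical in
theorem sum_columnsByTwinType [Fintype β] :
    ∑ z, Function.uncurry (columnsByTwinType G c₁ c₂ c₃) z =
      m1 G * ∑ v, c₁ v + m2 G * ∑ v, c₂ v + m3 G * ∑ v, c₃ v := by
  have hsum : ∀ (S : Finset α) (c : β → ℝ), (∀ u ∈ S, columnsByTwinType G c₁ c₂ c₃ u = c) →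
      ∑ u ∈ S, ∑ v, columnsByTwinType G c₁ c₂ c₃ u v = #S * ∑ v, c v := fun S c hS => by
    rw [sum_congr rfl fun u hu => by rw [hS u hu], sum_const, nsmul_eq_mul]
  rw [Fintype.sum_prod_type, ← G.sum_twin_types]
  refine congrArg₂ (· + ·) (congrArg₂ (· + ·) ?_ ?_) ?_ <;> refine hsum _ _ fun u hu => ?_
  · exact columnsByTwinType_of_forall_not_twins (mem_filter.mp hu).2
  · obtain ⟨w, hT, ha⟩ := (mem_filter.mp hu).2
    exact columnsByTwinType_of_twins_of_adj hT ha
  · obtain ⟨w, hT, ha⟩ := (mem_filter.mp hu).2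
    exact columnsByTwinType_of_twins_of_not_adj hT ha

end TwinTypes

section Bounds

variable [Fintype α] [Fintype β] [DecidableEq β] {G : SimpleGraph α} {H : SimpleGraph β}
  [DecidableRel H.Adj]

open scoped Classical in
theorem le_sum_of_isResolvingFn_lexProd (hG : ∀ u, ¬G.IsIsolated u) {g : α × β → ℝ}
    (hg : IsResolvingFn (G.lexProd H) g) :
    m1 G * fracLoc H + m2 G / 2 * fracMetricDim K₂[H] + m3 G / 2 * fracMetricDim K₂[Hᶜ] ≤
      ∑ z, g z := by
  have hcol : ∀ u, IsLocatingFn H fun v => g (u, v) := fun u => by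
    obtain ⟨s, hs⟩ : ∃ s, G.Adj u s := by simpa [IsIsolated] using hG u
    exact hg.isLocatingFn_col hs
  have h₁ : m1 G * fracLoc H ≤ ∑ u with (∀ w, ¬G.Twins u w), ∑ v, g (u, v) := by
    simpa [m1] using card_nsmul_le_sum _ _ _ fun u _ => fracLoc_le (hcol u)
  have h₂ := m2_mul_le_two_mul_sum (G := G) fun u w hT ha =>
    (fracMetricDim_le (hg.comp_embedPair_of_adj hT ha)).trans_eq (sum_comp_embedPair g)
  have h₃ := m3_mul_le_two_mul_sum (G := G) fun u w hT ha =>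
    (fracMetricDim_le (hg.comp_embedPair_of_not_adj hG hT ha)).trans_eq (sum_comp_embedPair g)
  rw [Fintype.sum_prod_type, ← G.sum_twin_types]
  linarith

theorem isResolvingFn_columnsByTwinType (hG : ∀ u, ¬G.IsIsolated u) (hcb : 2 ≤ Fintype.card β)
    {c₁ c₂ c₃ : β → ℝ} (hc₁ : IsLocatingFn H c₁) (hc₂ : IsResolvingFn K₂[H] fun p => c₂ p.2)
    (hc₃ : IsResolvingFn K₂[Hᶜ] fun p => c₃ p.2) :
    IsResolvingFn (G.lexProd H) (Function.uncurry (columnsByTwinType G c₁ c₂ c₃)) := by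
  have h01 : (⊤ : SimpleGraph (Fin 2)).Adj 0 1 := by simp
  refine isResolvingFn_lexProd_of hG hcb (fun u => ?_) (fun u₁ u₂ hT ha => ?_)
    fun u₁ u₂ hT ha => ?_
  · simp only [Function.uncurry_apply_pair, columnsByTwinType]
    split_ifs
    exacts [hc₁, hc₂.isLocatingFn_col h01, isLocatingFn_compl_iff.mp (hc₃.isLocatingFn_col h01)]
  · convert hc₂ using 1
    funext ⟨i, v⟩
    fin_cases i <;> simp [embedPair, columnsByTwinType_of_twins_of_adj hT ha,
      columnsByTwinType_of_twins_of_adj hT.symm ha.symm]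
  · convert hc₃ using 1
    funext ⟨i, v⟩
    fin_cases i <;> simp [embedPair, columnsByTwinType_of_twins_of_not_adj hT ha,
      columnsByTwinType_of_twins_of_not_adj hT.symm fun h => ha h.symm]

open scoped Classical in
theorem fracMetricDim_lexProd_le (hG : ∀ u, ¬G.IsIsolated u) (hcb : 2 ≤ Fintype.card β)
    {gL : β → ℝ} {g₂ g₃ : Fin 2 × β → ℝ} (hgL : IsLocatingFn H gL)
    (hg₂ : IsResolvingFn K₂[H] g₂) (hg₃ : IsResolvingFn K₂[Hᶜ] g₃) :
    fracMetricDim (G.lexProd H) ≤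
      m1 G * ∑ v, gL v + m2 G / 2 * ∑ p, g₂ p + m3 G / 2 * ∑ p, g₃ p := by
  obtain ⟨h₂, hh₂, hs₂⟩ := hg₂.exists_comp_snd
  obtain ⟨h₃, hh₃, hs₃⟩ := hg₃.exists_comp_snd
  refine (fracMetricDim_le (isResolvingFn_columnsByTwinType hG hcb hgL hh₂ hh₃)).trans_eq ?_
  rw [sum_columnsByTwinType, ← hs₂, ← hs₃]
  ring

end Bounds

/-- For a connected graph `G` and a graph `H`,
`dim_f(G[H]) = m₁(G)·l_f(H) + (m₂(G)/2)·dim_f(K₂[H]) + (m₃(G)/2)·dim_f(K₂[H̄])`. -/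
theorem stmt_16 {α β : Type*} [Fintype α] [Fintype β] [DecidableEq β]
    (G : SimpleGraph α) (H : SimpleGraph β) [DecidableRel H.Adj]
    (hG : G.Connected) (hca : 2 ≤ Fintype.card α) (hcb : 2 ≤ Fintype.card β) :
    fracMetricDim (G.lexProd H) =
      (m1 G : ℝ) * fracLoc H +
        (m2 G : ℝ) / 2 * fracMetricDim ((⊤ : SimpleGraph (Fin 2)).lexProd H) +
        (m3 G : ℝ) / 2 * fracMetricDim ((⊤ : SimpleGraph (Fin 2)).lexProd Hᶜ) := by
  have : Nontrivial α := Fintype.one_lt_card_iff_nontrivial.mp hca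
  have hG' : ∀ u, ¬G.IsIsolated u := hG.preconnected.not_isIsolated
  refine le_antisymm ?_ (le_fracMetricDim fun g hg => le_sum_of_isResolvingFn_lexProd hG' hg)
  refine le_add_mul_fracMetricDim (by positivity) fun g₃ hg₃ => ?_
  rw [add_right_comm]
  refine le_add_mul_fracMetricDim (by positivity) fun g₂ hg₂ => ?_
  rw [add_assoc, add_comm]
  refine le_add_mul_fracLoc (by positivity) fun gL hgL => ?_
  linarith [fracMetricDim_lexProd_le hG' hcb hgL hg₂ hg₃]
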